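/- arXiv:2312.03515 — 2 statements merged into one kernel-verified Lean document; each statement's English description precedes it below -/
import Mathlib

section
/- Let τ be a quantum state on ℂ^{d₂}, and for m = 1,…,M let U_m be incoherent unitaries on ℂ^{d₁} ⊗ ℂ^{d₂} (with respect to the product computational basis), x_m computational basis indices of ℂ^{d₂}, α_m > 0 real numbers, and λ_m ≥ 0 with Σ_m λ_m = 1. Suppose the map E(ρ) = Σ_m λ_m α_m Tr₂((1_{d₁} ⊗ |x_m⟩⟨x_m|) U_m (ρ ⊗ τ) U_m†) satisfies E(ρ) = V ρ V† for every quantum state ρ on ℂ^{d₁}, for some unitary V on ℂ^{d₁}. Then V is incoherent. In particular, incoherent unitaries, computational basis measurements, classical control and an arbitrary ancilla state cannot implement any coherent unitary exactly, even with nonzero probability. -/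
open Matrix Complex
open scoped Kronecker Classical ComplexOrder

noncomputable section

/-- A matrix is *incoherent* (w.r.t. the computational basis) if it has the form
`Σ_x e^{iθ_x} |π(x)⟩⟨x|` for a permutation `π` and real phases `θ`. -/
def IsIncoherent {d : Type*} [Fintype d] [DecidableEq d] (U : Matrix d d ℂ) : Prop :=
  ∃ (π : Equiv.Perm d) (θ : d → ℝ),
    U = Matrix.of fun i j => if i = π j then Complex.exp ((θ j : ℂ) * Complex.I) else 0

/-- The dephasing map `Δ`, zeroing all off-diagonal entries. -/
def dephase {d : Type*} [DecidableEq d] (ρ : Matrix d d ℂ) : Matrix d d ℂ :=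
  Matrix.of fun i j => if i = j then ρ i j else 0

/-- Partial trace over the second tensor factor. -/
def ptrace2 {α β : Type*} [Fintype β] (A : Matrix (α × β) (α × β) ℂ) : Matrix α α ℂ :=
  Matrix.of fun i i' => ∑ j, A (i, j) (i', j)

/-- Partial trace over the first tensor factor. -/
def ptrace1 {α β : Type*} [Fintype α] (A : Matrix (α × β) (α × β) ℂ) : Matrix β β ℂ :=
  Matrix.of fun j j' => ∑ i, A (i, j) (i, j')

/-- A quantum state: positive semidefinite matrix of trace one. -/
def IsState {d : Type*} [Fintype d] (ρ : Matrix d d ℂ) : Prop :=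
  ρ.PosSemidef ∧ ρ.trace = 1

/-- The Choi matrix of a linear map between matrix algebras. -/
def choiMatrix {a b : Type*} [Fintype a] [DecidableEq a] [Fintype b]
    (E : Matrix a a ℂ →ₗ[ℂ] Matrix b b ℂ) : Matrix (a × b) (a × b) ℂ :=
  Matrix.of fun p q => E (Matrix.single p.1 q.1 1) p.2 q.2

/-- A quantum channel: completely positive (PSD Choi matrix) trace-preserving linear map. -/
def IsChannel {a b : Type*} [Fintype a] [DecidableEq a] [Fintype b] [DecidableEq b]
    (E : Matrix a a ℂ →ₗ[ℂ] Matrix b b ℂ) : Prop :=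
  (choiMatrix E).PosSemidef ∧ ∀ ρ, (E ρ).trace = ρ.trace

/-- The trace norm `‖M‖₁ = Tr √(M†M)`. -/
def traceNorm {d : Type*} [Fintype d] [DecidableEq d] (M : Matrix d d ℂ) : ℝ :=
  (((Matrix.posSemidef_conjTranspose_mul_self M).1.eigenvectorUnitary.1 *
      diagonal ((RCLike.ofReal : ℝ → ℂ) ∘ (√·) ∘ (Matrix.posSemidef_conjTranspose_mul_self M).1.eigenvalues) *
      (star (Matrix.posSemidef_conjTranspose_mul_self M).1.eigenvectorUnitary : Matrix d d ℂ)).trace).re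

/-- The trace distance `D(ρ,σ) = ½‖ρ−σ‖₁`. -/
def traceDist {d : Type*} [Fintype d] [DecidableEq d] (ρ σ : Matrix d d ℂ) : ℝ :=
  traceNorm (ρ - σ) / 2

/-- The coherence rank of a vector: the number of nonzero coordinates. -/
def cohRank {d : Type*} [Fintype d] (ψ : d → ℂ) : ℕ :=
  (Finset.univ.filter fun x => ψ x ≠ 0).card

/-- The Hadamard gate. -/
def Hmat : Matrix (Fin 2) (Fin 2) ℂ :=
  Matrix.of fun a b => (((Real.sqrt 2)⁻¹ : ℝ) : ℂ) * (if a = 1 ∧ b = 1 then -1 else 1)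

/-- `H^{⊗n}`, the n-fold Kronecker power of the Hadamard gate. -/
def Hpow (n : ℕ) : Matrix (Fin n → Fin 2) (Fin n → Fin 2) ℂ :=
  Matrix.of fun i j => ∏ q, Hmat (i q) (j q)

/-- A generalized controlled-Hadamard on qubits indexed by `I`: for some target qubit `t`
and set `S` of configurations of the other qubits, apply `H` on qubit `t` controlled on the
other qubits being in `S`. -/
def IsCtrlHadamard {I : Type*} [Fintype I] [DecidableEq I]
    (V : Matrix (I → Fin 2) (I → Fin 2) ℂ) : Prop :=
  ∃ (t : I) (S : Finset ({i : I // i ≠ t} → Fin 2)),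
    V = Matrix.of fun a b =>
      if (fun i : {i : I // i ≠ t} => b i.1) ∈ S then
        (if ∀ i, i ≠ t → a i = b i then Hmat (a t) (b t) else 0)
      else (if a = b then (1 : ℂ) else 0)

/-- The alternating product `U_k * V_k * ⋯ * U_1 * V_1 * U_0`. -/
def altProd {X : Type*} [Monoid X] : (k : ℕ) → (Fin (k + 1) → X) → (Fin k → X) → X
  | 0, Us, _ => Us 0
  | (k + 1), Us, Vs =>
      Us (Fin.last (k + 1)) * Vs (Fin.last k) *
        altProd k (fun i => Us i.castSucc) (fun i => Vs i.castSucc)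

/-- Auxiliary: if a family of vectors sums (as rank-one outer products) to a single rank-one
outer product, then the cross-ratio identity holds for each member. -/
theorem rankone_prop {ι d : Type*} [Fintype ι] [Fintype d]
    (u : ι → d → ℂ) (v : d → ℂ)
    (h : ∀ a a', ∑ t, u t a * star (u t a') = v a * star (v a'))
    (a₀ : d) (t : ι) (b : d) : v a₀ * u t b = u t a₀ * v b := by
  set g : ι → ℂ := fun s => v a₀ * u s b - u s a₀ * v b with hg
  have hexp : ∀ s, g s * star (g s) =
      v a₀ * star (v a₀) * (u s b * star (u s b))
      + (u s a₀ * star (u s a₀)) * (v b * star (v b))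
      - v a₀ * star (v b) * (u s b * star (u s a₀))
      - star (v a₀) * v b * (u s a₀ * star (u s b)) := by
    intro s
    simp only [hg, star_sub, star_mul']
    ring
  have hsum : ∑ s, g s * star (g s) = 0 := by
    simp only [hexp]
    rw [Finset.sum_sub_distrib, Finset.sum_sub_distrib, Finset.sum_add_distrib,
      ← Finset.mul_sum, ← Finset.sum_mul, ← Finset.mul_sum, ← Finset.mul_sum,
      h b b, h a₀ a₀, h b a₀, h a₀ b]
    ring
  have hre : ∑ s, (normSq (g s) : ℝ) = 0 := by
    have : ((∑ s, (normSq (g s) : ℝ) : ℝ) : ℂ) = 0 := by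
      push_cast
      rw [← hsum]
      refine Finset.sum_congr rfl fun s _ => ?_
      rw [← Complex.mul_conj (g s)]; rfl
    exact_mod_cast this
  have hz : g t = 0 := by
    have := (Finset.sum_eq_zero_iff_of_nonneg
      (fun s _ => normSq_nonneg (g s))).mp hre t (Finset.mem_univ t)
    exact normSq_eq_zero.mp this
  exact sub_eq_zero.mp hz

theorem ptrace2_proj_mul {d₁ d₂ : ℕ} (xm : Fin d₂)
    (A : Matrix (Fin d₁ × Fin d₂) (Fin d₁ × Fin d₂) ℂ) (a a' : Fin d₁) :
    ptrace2 (((1 : Matrix (Fin d₁) (Fin d₁) ℂ) ⊗ₖ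
      Matrix.single xm xm (1 : ℂ)) * A) a a' = A (a, xm) (a', xm) := by
  simp only [ptrace2, Matrix.of_apply, Matrix.mul_apply, Fintype.sum_prod_type,
    Matrix.kroneckerMap_apply, Matrix.one_apply, Matrix.single, Matrix.of_apply,
    ite_and, ite_mul, mul_ite, one_mul, zero_mul, mul_zero, mul_one,
    Finset.sum_ite_eq, Finset.sum_ite_eq', Finset.mem_univ, if_true]
  simp [Finset.sum_ite_irrel, Finset.sum_ite_eq, Finset.sum_const_zero]

theorem vecMulVec_state {d : ℕ} (ψ : Fin d → ℂ)
    (hψ : ∑ a, ψ a * star (ψ a) = 1) :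
    IsState (Matrix.vecMulVec ψ (star ψ)) := by
  constructor
  · exact Matrix.posSemidef_vecMulVec_self_star ψ
  · simpa [Matrix.trace, Matrix.diag, Matrix.vecMulVec_apply] using hψ

theorem perm_conj_entry {n : Type*} [Fintype n] [DecidableEq n]
    (π : Equiv.Perm n) (θ : n → ℝ) (Z : Matrix n n ℂ) (p q : n) :
    ((Matrix.of fun i j => if i = π j then Complex.exp ((θ j : ℂ) * Complex.I) else 0) * Z *
      (Matrix.of fun i j => if i = π j then Complex.exp ((θ j : ℂ) * Complex.I) else 0)ᴴ) p q
    = Complex.exp ((θ (π.symm p) : ℂ) * Complex.I) * Z (π.symm p) (π.symm q) *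
        star (Complex.exp ((θ (π.symm q) : ℂ) * Complex.I)) := by
  have hc : ∀ (y r : n), (y = π r) = (π.symm y = r) := fun y r =>
    propext ⟨fun h => by simp [h], fun h => by simp [← h]⟩
  simp only [Matrix.mul_apply, Matrix.conjTranspose_apply, Matrix.of_apply, hc,
    ite_mul, zero_mul, mul_ite, mul_zero, apply_ite (star : ℂ → ℂ), star_zero,
    Finset.sum_ite_eq, Finset.mem_univ, if_true]

/-- If a convex combination of (normalised) measurement subchannels built from
incoherent unitaries and an ancilla state implements a unitary `V`, then `V` is incoherent. -/
theorem probabilistic_incoherent_no_coherent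
    (d₁ d₂ M : ℕ)
    (τ : Matrix (Fin d₂) (Fin d₂) ℂ) (hτ : IsState τ)
    (U : Fin M → Matrix (Fin d₁ × Fin d₂) (Fin d₁ × Fin d₂) ℂ)
    (hUni : ∀ m, U m ∈ Matrix.unitaryGroup (Fin d₁ × Fin d₂) ℂ)
    (hInc : ∀ m, IsIncoherent (U m))
    (x : Fin M → Fin d₂) (α : Fin M → ℝ) (hα : ∀ m, 0 < α m)
    (l : Fin M → ℝ) (hl : ∀ m, 0 ≤ l m) (hlsum : ∑ m, l m = 1)
    (V : Matrix (Fin d₁) (Fin d₁) ℂ) (hV : V ∈ Matrix.unitaryGroup (Fin d₁) ℂ)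
    (himpl : ∀ ρ, IsState ρ →
      (∑ m, ((l m * α m : ℝ) : ℂ) •
        ptrace2 (((1 : Matrix (Fin d₁) (Fin d₁) ℂ) ⊗ₖ
            Matrix.single (x m) (x m) (1 : ℂ)) *
          (U m * (ρ ⊗ₖ τ) * (U m)ᴴ))) = V * ρ * Vᴴ) :
    IsIncoherent V := by
  classical
  -- unitarity facts about V
  have hmem := Matrix.mem_unitaryGroup_iff.mp hV
  have hmem' := Matrix.mem_unitaryGroup_iff'.mp hV
  have hVrow : ∀ a a', ∑ i, V a i * star (V a' i) = if a = a' then (1 : ℂ) else 0 := by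
    intro a a'
    have h := congrFun (congrFun hmem a) a'
    simpa [Matrix.mul_apply, Matrix.star_eq_conjTranspose, Matrix.conjTranspose_apply,
      Matrix.one_apply] using h
  have hVcol : ∀ i i', ∑ a, star (V a i) * V a i' = if i = i' then (1 : ℂ) else 0 := by
    intro i i'
    have h := congrFun (congrFun hmem' i) i'
    simpa [Matrix.mul_apply, Matrix.star_eq_conjTranspose, Matrix.conjTranspose_apply,
      Matrix.one_apply] using h
  rcases Nat.eq_zero_or_pos d₁ with hd | hd
  · refine ⟨Equiv.refl _, fun _ => 0, ?_⟩
    ext a i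
    exact absurd a.2 (by omega)
  unfold IsIncoherent at hInc
  choose π θ hU using hInc
  obtain ⟨B, hB⟩ : ∃ B : Matrix (Fin d₂) (Fin d₂) ℂ, τ = Bᴴ * B := by
    open scoped MatrixOrder in
    obtain ⟨X, hX, -, hXX⟩ := CFC.exists_sqrt_of_isSelfAdjoint_of_quasispectrumRestricts
      hτ.1.isHermitian (QuasispectrumRestricts.nnreal_of_nonneg hτ.1.nonneg)
    exact ⟨X, by rw [← hXX, ← star_eq_conjTranspose, hX.star_eq]⟩
  have hτe : ∀ j j', τ j j' = ∑ k, star (B k j) * B k j' := by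
    intro j j'
    rw [hB]
    simp [Matrix.mul_apply, Matrix.conjTranspose_apply]
  set Lv : Fin M → Fin d₂ → (Fin d₁ → ℂ) → Fin d₁ → ℂ := fun m k ψ b =>
    ((Real.sqrt (l m * α m) : ℝ) : ℂ) *
      (star (B k ((π m).symm (b, x m)).2) *
        Complex.exp ((θ m ((π m).symm (b, x m)) : ℂ) * Complex.I) *
        ψ (((π m).symm (b, x m)).1)) with hLvdef
  have hsq : ∀ m, ((Real.sqrt (l m * α m) : ℝ) : ℂ) * ((Real.sqrt (l m * α m) : ℝ) : ℂ)
      = ((l m * α m : ℝ) : ℂ) := by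
    intro m
    rw [← Complex.ofReal_mul, Real.mul_self_sqrt (mul_nonneg (hl m) (hα m).le)]
  have master : ∀ ψ : Fin d₁ → ℂ, (∑ a, ψ a * star (ψ a)) = 1 → ∀ a a',
      (∑ m, ∑ k, Lv m k ψ a * star (Lv m k ψ a')) = (V *ᵥ ψ) a * star ((V *ᵥ ψ) a') := by
    intro ψ hψ a a'
    have h1 := himpl _ (vecMulVec_state ψ hψ)
    have h2 := congrFun (congrFun h1 a) a'
    rw [Matrix.sum_apply] at h2
    have hL : ∀ m, (((l m * α m : ℝ) : ℂ) •
        ptrace2 (((1 : Matrix (Fin d₁) (Fin d₁) ℂ) ⊗ₖ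
            Matrix.single (x m) (x m) (1 : ℂ)) *
          (U m * (Matrix.vecMulVec ψ (star ψ) ⊗ₖ τ) * (U m)ᴴ))) a a'
        = ∑ k, Lv m k ψ a * star (Lv m k ψ a') := by
      intro m
      rw [Matrix.smul_apply, smul_eq_mul, ptrace2_proj_mul, hU m, perm_conj_entry]
      simp only [Matrix.kroneckerMap_apply, Matrix.vecMulVec_apply, hτe, hLvdef,
        Pi.star_apply]
      simp only [star_mul', star_star, Complex.star_def, Complex.conj_conj, Complex.conj_ofReal]
      rw [← hsq m]
      simp only [Finset.mul_sum, Finset.sum_mul]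
      refine Finset.sum_congr rfl fun k _ => ?_
      ring
    have h3 : (∑ m, ∑ k, Lv m k ψ a * star (Lv m k ψ a'))
        = (V * Matrix.vecMulVec ψ (star ψ) * Vᴴ) a a' := by
      rw [← h2]
      exact Finset.sum_congr rfl fun m _ => (hL m).symm
    rw [h3]
    simp only [Matrix.mul_apply, Matrix.conjTranspose_apply, Matrix.vecMulVec_apply,
      Matrix.mulVec, dotProduct, Pi.star_apply, star_sum, star_mul',
      Finset.sum_mul, Finset.mul_sum, star_star]
    exact Finset.sum_congr rfl fun i _ => Finset.sum_congr rfl fun j _ => by ring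
  -- basis vectors
  set e : Fin d₁ → Fin d₁ → ℂ := fun i b => if b = i then 1 else 0 with he
  have he_state : ∀ i, (∑ a, e i a * star (e i a)) = 1 := by
    intro i
    simp [he, apply_ite (star : ℂ → ℂ), Finset.sum_ite_eq']
  have hVe : ∀ i a, (V *ᵥ e i) a = V a i := by
    intro i a
    simp [Matrix.mulVec, dotProduct, he, mul_ite, mul_one, mul_zero,
      Finset.sum_ite_eq', Finset.mem_univ, if_true]
  have hsupp : ∀ m k i b, ((π m).symm (b, x m)).1 ≠ i → Lv m k (e i) b = 0 := by
    intro m k i b hne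
    simp [hLvdef, he, if_neg hne]
  set i0 : Fin d₁ := ⟨0, hd⟩ with hi0
  obtain ⟨a₀, ha₀⟩ : ∃ a₀, V a₀ i0 ≠ 0 := by
    by_contra hc
    push_neg at hc
    have h := hVcol i0 i0
    simp [hc] at h
  obtain ⟨m₀, k₀, hL0⟩ : ∃ m₀ k₀, Lv m₀ k₀ (e i0) a₀ ≠ 0 := by
    by_contra hc
    push_neg at hc
    have h := master (e i0) (he_state i0) a₀ a₀
    rw [hVe i0 a₀] at h
    simp only [hc, zero_mul, Finset.sum_const_zero] at h
    rcases mul_eq_zero.mp h.symm with h' | h'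
    · exact ha₀ h'
    · exact ha₀ (star_eq_zero.mp h')
  have hprop0 : ∀ b, (V *ᵥ e i0) a₀ * Lv m₀ k₀ (e i0) b
      = Lv m₀ k₀ (e i0) a₀ * (V *ᵥ e i0) b := fun b =>
    rankone_prop (fun t : Fin M × Fin d₂ => Lv t.1 t.2 (e i0)) (V *ᵥ e i0)
      (fun a a' => by
        rw [Fintype.sum_prod_type]
        exact master (e i0) (he_state i0) a a') a₀ (m₀, k₀) b
  set c : ℂ := Lv m₀ k₀ (e i0) a₀ / V a₀ i0 with hcdef
  have hc0 : c ≠ 0 := div_ne_zero hL0 ha₀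
  have hw0 : ∀ b, Lv m₀ k₀ (e i0) b = c * V b i0 := by
    intro b
    have h := hprop0 b
    rw [hVe i0 a₀, hVe i0 b] at h
    rw [hcdef, div_mul_eq_mul_div, eq_div_iff ha₀]
    linear_combination h
  have hkey : ∀ i b, Lv m₀ k₀ (e i) b = c * V b i := by
    intro i
    by_cases hi : i = i0
    · rw [hi]; exact hw0
    · set s : ℂ := (((Real.sqrt 2)⁻¹ : ℝ) : ℂ) with hs
      have hstars : star s = s := by rw [hs, Complex.star_def, Complex.conj_ofReal]
      have hss : s * s = (1 / 2 : ℂ) := by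
        rw [hs, ← Complex.ofReal_mul]
        have : (Real.sqrt 2)⁻¹ * (Real.sqrt 2)⁻¹ = (2 : ℝ)⁻¹ := by
          rw [← mul_inv, Real.mul_self_sqrt (by norm_num)]
        rw [this]
        norm_num
      have hsne : s ≠ 0 := by
        rw [hs]
        exact Complex.ofReal_ne_zero.mpr
          (inv_ne_zero (ne_of_gt (Real.sqrt_pos.mpr (by norm_num))))
      set φ : Fin d₁ → ℂ := fun b => s * (e i0 b + e i b) with hφ
      have hφs : (∑ a, φ a * star (φ a)) = 1 := by
        have hpt : ∀ a, φ a * star (φ a)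
            = (s * s) * ((if a = i0 then (1 : ℂ) else 0) + if a = i then 1 else 0) := by
          intro a
          simp only [hφ, he, star_mul', star_add, hstars,
            apply_ite (star : ℂ → ℂ), star_one, star_zero]
          by_cases h1 : a = i0 <;> by_cases h2 : a = i
          · exact absurd (h2.symm.trans h1) hi
          · simp [h1, h2, hi, Ne.symm hi]
            try ring
          · simp [h1, h2, hi, Ne.symm hi]
            try ring
          · simp [h1, h2, hi, Ne.symm hi]
            try ring
        rw [Finset.sum_congr rfl fun a _ => hpt a, ← Finset.mul_sum]
        rw [Finset.sum_add_distrib, Finset.sum_ite_eq', Finset.sum_ite_eq']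
        simp [hss]
        norm_num
      have hVφ : ∀ b, (V *ᵥ φ) b = s * (V b i0 + V b i) := by
        intro b
        simp only [Matrix.mulVec, dotProduct, hφ, he]
        have hpt : ∀ r, V b r * (s * ((if r = i0 then (1 : ℂ) else 0) + if r = i then 1 else 0))
            = s * ((if r = i0 then V b r else 0) + if r = i then V b r else 0) := by
          intro r
          by_cases h1 : r = i0 <;> by_cases h2 : r = i
          · exact absurd (h2.symm.trans h1) hi
          · simp [h1, h2, hi, Ne.symm hi]
            try ring
          · simp [h1, h2, hi, Ne.symm hi]
            try ring
          · simp [h1, h2, hi, Ne.symm hi]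
            try ring
        rw [Finset.sum_congr rfl fun r _ => hpt r, ← Finset.mul_sum]
        rw [Finset.sum_add_distrib, Finset.sum_ite_eq', Finset.sum_ite_eq']
        simp
      obtain ⟨b₁, hb₁⟩ : ∃ b₁, (V *ᵥ φ) b₁ ≠ 0 := by
        by_contra hcb
        push_neg at hcb
        have hnorm : ∑ b, star ((V *ᵥ φ) b) * ((V *ᵥ φ) b) = 1 := by
          have hpt : ∀ b, star ((V *ᵥ φ) b) * ((V *ᵥ φ) b)
              = (s * s) * ((star (V b i0) * V b i0) + (star (V b i0) * V b i)
                + (star (V b i) * V b i0) + (star (V b i) * V b i)) := by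
            intro b
            rw [hVφ b]
            simp only [star_mul', star_add, hstars]
            ring
          rw [Finset.sum_congr rfl fun b _ => hpt b, ← Finset.mul_sum]
          simp only [Finset.sum_add_distrib]
          rw [hVcol i0 i0, hVcol i0 i, hVcol i i0, hVcol i i]
          rw [if_pos rfl, if_pos rfl, if_neg (fun h => hi h.symm), if_neg hi]
          rw [hss]
          norm_num
        simp only [hcb, star_zero, zero_mul, Finset.sum_const_zero] at hnorm
        exact zero_ne_one hnorm
      have hpropφ : ∀ b, (V *ᵥ φ) b₁ * Lv m₀ k₀ φ b
          = Lv m₀ k₀ φ b₁ * (V *ᵥ φ) b := fun b =>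
        rankone_prop (fun t : Fin M × Fin d₂ => Lv t.1 t.2 φ) (V *ᵥ φ)
          (fun a a' => by
            rw [Fintype.sum_prod_type]
            exact master φ hφs a a') b₁ (m₀, k₀) b
      set c' : ℂ := Lv m₀ k₀ φ b₁ / (V *ᵥ φ) b₁ with hc'def
      have hwφ : ∀ b, Lv m₀ k₀ φ b = c' * (V *ᵥ φ) b := by
        intro b
        have h := hpropφ b
        rw [hc'def, div_mul_eq_mul_div, eq_div_iff hb₁]
        linear_combination h
      have hlin : ∀ b, Lv m₀ k₀ φ b = s * (Lv m₀ k₀ (e i0) b + Lv m₀ k₀ (e i) b) := by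
        intro b
        simp only [hLvdef, hφ]
        ring
      have hzero2 : ∑ b, star (V b i0) * Lv m₀ k₀ (e i) b = 0 := by
        refine Finset.sum_eq_zero fun b _ => ?_
        by_cases hvb : V b i0 = 0
        · rw [hvb, star_zero, zero_mul]
        · have hne : ((π m₀).symm (b, x m₀)).1 = i0 := by
            by_contra hno
            exact hvb (by
              have := hsupp m₀ k₀ i0 b hno
              rw [hw0 b] at this
              rcases mul_eq_zero.mp this with h' | h'
              · exact absurd h' hc0
              · exact h')
          rw [hsupp m₀ k₀ i b (by rw [hne]; exact fun h => hi h.symm), mul_zero]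
      have hcc : c' = c := by
        have hIP1 : ∑ b, star (V b i0) * Lv m₀ k₀ φ b = c' * s := by
          rw [Finset.sum_congr rfl fun b _ => by rw [hwφ b, hVφ b]]
          have hpt : ∀ b, star (V b i0) * (c' * (s * (V b i0 + V b i)))
              = c' * s * (star (V b i0) * V b i0 + star (V b i0) * V b i) := by
            intro b; ring
          rw [Finset.sum_congr rfl fun b _ => hpt b, ← Finset.mul_sum]
          rw [Finset.sum_add_distrib, hVcol i0 i0, hVcol i0 i]
          rw [if_pos rfl, if_neg (fun h => hi h.symm)]
          ring
        have hIP2 : ∑ b, star (V b i0) * Lv m₀ k₀ φ b = c * s := by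
          rw [Finset.sum_congr rfl fun b _ => by rw [hlin b, hw0 b]]
          have hpt : ∀ b, star (V b i0) * (s * (c * V b i0 + Lv m₀ k₀ (e i) b))
              = s * c * (star (V b i0) * V b i0) + s * (star (V b i0) * Lv m₀ k₀ (e i) b) := by
            intro b; ring
          rw [Finset.sum_congr rfl fun b _ => hpt b]
          rw [Finset.sum_add_distrib, ← Finset.mul_sum, ← Finset.mul_sum]
          rw [hVcol i0 i0, if_pos rfl, hzero2]
          ring
        have := hIP1.symm.trans hIP2
        exact mul_right_cancel₀ hsne this
      intro b
      have h := hwφ b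
      rw [hcc, hVφ b, hlin b, hw0 b] at h
      have h5 : s * Lv m₀ k₀ (e i) b = s * (c * V b i) := by linear_combination h
      exact mul_left_cancel₀ hsne h5
  -- Step 3: structure of V
  have hVzero : ∀ b i, i ≠ ((π m₀).symm (b, x m₀)).1 → V b i = 0 := by
    intro b i hne
    have h := hkey i b
    rw [hsupp m₀ k₀ i b (fun hh => hne hh.symm)] at h
    rcases mul_eq_zero.mp h.symm with h' | h'
    · exact absurd h' hc0
    · exact h'
  set f : Fin d₁ → Fin d₁ := fun b => ((π m₀).symm (b, x m₀)).1 with hf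
  have hdiag : ∀ b, V b (f b) * star (V b (f b)) = 1 := by
    intro b
    have h := hVrow b b
    rw [if_pos rfl] at h
    rw [← h]
    symm
    apply Finset.sum_eq_single (f b)
    · intro i _ hne
      rw [hVzero b i hne, zero_mul]
    · intro hnm
      exact absurd (Finset.mem_univ _) hnm
  have hfne : ∀ b, V b (f b) ≠ 0 := by
    intro b hz
    have h := hdiag b
    rw [hz, zero_mul] at h
    exact zero_ne_one h
  have hfinj : Function.Injective f := by
    intro b b' hbb
    by_contra hne
    have h := hVrow b b'
    rw [if_neg hne] at h
    have h2 : V b (f b) * star (V b' (f b)) = 0 := by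
      rw [← h]
      symm
      apply Finset.sum_eq_single (f b)
      · intro i _ hne2
        rw [hVzero b i hne2, zero_mul]
      · intro hnm
        exact absurd (Finset.mem_univ _) hnm
    rcases mul_eq_zero.mp h2 with h' | h'
    · exact hfne b h'
    · exact hfne b' (by rwa [hbb, star_eq_zero] at h')
  have hfbij : Function.Bijective f := Finite.injective_iff_bijective.mp hfinj
  set F : Equiv.Perm (Fin d₁) := Equiv.ofBijective f hfbij with hF
  have hFapp : ∀ b, F b = f b := fun b => rfl
  refine ⟨F.symm, fun i => (V (F.symm i) i).arg, ?_⟩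
  ext b i
  simp only [Matrix.of_apply]
  by_cases hb : b = F.symm i
  · rw [if_pos hb, hb]
    have hfi : f (F.symm i) = i := by
      have h := F.apply_symm_apply i
      rwa [hFapp] at h
    have hnz : V (F.symm i) i ≠ 0 := by
      have h := hfne (F.symm i)
      rwa [hfi] at h
    have habs : ‖V (F.symm i) i‖ = 1 := by
      have h := hdiag (F.symm i)
      rw [hfi] at h
      have hns : (normSq (V (F.symm i) i) : ℂ) = 1 := by
        rw [← Complex.mul_conj]
        exact h
      have hns' : normSq (V (F.symm i) i) = 1 := by exact_mod_cast hns
      rw [Complex.norm_def, hns', Real.sqrt_one]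
    conv_lhs => rw [← Complex.norm_mul_exp_arg_mul_I (V (F.symm i) i)]
    rw [habs, Complex.ofReal_one, one_mul]
  · rw [if_neg hb]
    apply hVzero
    intro hif
    apply hb
    rw [hif]
    have h := F.symm_apply_apply b
    rw [hFapp] at h
    exact h.symm
end
end

section
/- Let V be a generalized controlled-Hadamard on (ℂ²)^{⊗m}. Then for every nonzero vector ψ ∈ (ℂ²)^{⊗m}, the coherence rank satisfies χ(ψ)/2 ≤ χ(Vψ) ≤ 2·χ(ψ). Moreover, χ(Uψ) = χ(ψ) for every incoherent unitary U on (ℂ²)^{⊗m}. -/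
open Matrix Complex
open scoped Kronecker Classical ComplexOrder

noncomputable section

/-! ### Auxiliary lemmas -/

private lemma hmat_mul_hmat : Hmat * Hmat = 1 := by
  have h2r : ((Real.sqrt 2)⁻¹ : ℝ) * (Real.sqrt 2)⁻¹ = 2⁻¹ := by
    rw [← mul_inv, Real.mul_self_sqrt (by norm_num)]
  have hc : (((Real.sqrt 2 : ℝ)) : ℂ)⁻¹ * (((Real.sqrt 2 : ℝ)) : ℂ)⁻¹ = 2⁻¹ := by
    rw [← mul_inv, ← Complex.ofReal_mul, Real.mul_self_sqrt (by norm_num)]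
    norm_num
  ext i j
  fin_cases i <;> fin_cases j <;>
    simp [Hmat, Matrix.mul_apply, Fin.sum_univ_two, Matrix.one_apply,
      Complex.ofReal_inv] <;>
    linear_combination 2 * hc

private lemma cohRank_le_two (v : Fin 2 → ℂ) : cohRank v ≤ 2 := by
  have := Finset.card_filter_le (Finset.univ : Finset (Fin 2)) (fun x => v x ≠ 0)
  simpa [cohRank] using this

private lemma one_le_cohRank {d : Type*} [Fintype d] {v : d → ℂ} (hv : v ≠ 0) :
    1 ≤ cohRank v := by
  obtain ⟨x, hx⟩ := Function.ne_iff.mp hv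
  exact Finset.card_pos.mpr ⟨x, Finset.mem_filter.mpr ⟨Finset.mem_univ x, by simpa using hx⟩⟩

private lemma hadamard_pair_bound (v : Fin 2 → ℂ) :
    cohRank (Hmat.mulVec v) ≤ 2 * cohRank v ∧ cohRank v ≤ 2 * cohRank (Hmat.mulVec v) := by
  rcases eq_or_ne v 0 with rfl | hv
  · simp [Matrix.mulVec_zero, cohRank]
  · have hw : Hmat.mulVec v ≠ 0 := by
      intro h
      apply hv
      have h2 := congrArg Hmat.mulVec h
      rwa [Matrix.mulVec_mulVec, hmat_mul_hmat, Matrix.one_mulVec, Matrix.mulVec_zero] at h2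
    have b1 := cohRank_le_two v
    have b2 := cohRank_le_two (Hmat.mulVec v)
    have b3 := one_le_cohRank hv
    have b4 := one_le_cohRank hw
    omega

private lemma cohRank_eq_sum {α β : Type*} [Fintype α] [Fintype β]
    (e : (α × β) ≃ γ) [Fintype γ] (φ : γ → ℂ) :
    cohRank φ = ∑ c : β, cohRank (fun k : α => φ (e (k, c))) := by
  unfold cohRank
  rw [Finset.card_filter, ← Equiv.sum_comp e (fun a => if φ a ≠ 0 then 1 else 0),
    Fintype.sum_prod_type, Finset.sum_comm]
  congr 1
  ext c
  rw [Finset.card_filter]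

/-- A generalized controlled-Hadamard at most doubles and at least halves the
coherence rank of any nonzero vector; incoherent unitaries preserve the coherence rank. -/
theorem ctrlHadamard_cohRank_bounds (m : ℕ)
    (V : Matrix (Fin m → Fin 2) (Fin m → Fin 2) ℂ) (hV : IsCtrlHadamard V) :
    (∀ ψ : (Fin m → Fin 2) → ℂ, ψ ≠ 0 →
      (cohRank ψ : ℝ) / 2 ≤ (cohRank (V.mulVec ψ) : ℝ) ∧
      (cohRank (V.mulVec ψ) : ℝ) ≤ 2 * (cohRank ψ : ℝ)) ∧
    (∀ U : Matrix (Fin m → Fin 2) (Fin m → Fin 2) ℂ, IsIncoherent U →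
      ∀ ψ : (Fin m → Fin 2) → ℂ, ψ ≠ 0 → cohRank (U.mulVec ψ) = cohRank ψ) := by
  obtain ⟨t, S, hVeq⟩ := hV
  set e := Equiv.funSplitAt t (Fin 2) with he
  set ae : Fin 2 → ({j : Fin m // j ≠ t} → Fin 2) → (Fin m → Fin 2) :=
    fun k c => e.symm (k, c) with hae
  have hae_t : ∀ k c, ae k c t = k := by
    intro k c; simp [hae, he, Equiv.funSplitAt, Equiv.piSplitAt]
  have hae_ne : ∀ k c (i : Fin m) (h : i ≠ t), ae k c i = c ⟨i, h⟩ := by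
    intro k c i h; simp [hae, he, Equiv.funSplitAt, Equiv.piSplitAt, h]
  have hae_inj : ∀ k k' c c', ae k c = ae k' c' → k = k' ∧ c = c' := by
    intro k k' c c' h
    have := e.symm.injective h
    exact ⟨(Prod.ext_iff.mp this).1, (Prod.ext_iff.mp this).2⟩
  -- entry formula
  have hentry : ∀ (k k' : Fin 2) (c c' : {j : Fin m // j ≠ t} → Fin 2),
      V (ae k c) (ae k' c') =
        if c' = c then (if c ∈ S then Hmat k k' else if k' = k then 1 else 0) else 0 := by
    intro k k' c c'
    have hrest : (fun i : {i : Fin m // i ≠ t} => ae k' c' i.1) = c' := by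
      funext i; exact hae_ne k' c' i.1 i.2
    rw [hVeq]
    simp only [Matrix.of_apply, hrest]
    by_cases hcc : c' = c
    · subst hcc
      by_cases hS : c' ∈ S
      · simp only [hS, if_true]
        rw [if_pos, hae_t, hae_t]
        intro i hi
        rw [hae_ne k _ i hi, hae_ne k' _ i hi]
      · simp only [hS, if_false]
        by_cases hk : k' = k
        · subst hk; simp
        · have hne : ae k c' ≠ ae k' c' := fun h => hk ((hae_inj _ _ _ _ h).1.symm)
          rw [if_neg hne, if_neg hk]
          simp
    · by_cases hS : c' ∈ S
      · simp only [hS, if_true, if_neg hcc]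
        rw [if_neg]
        intro h
        apply hcc
        funext i
        rw [← hae_ne k' c' i.1 i.2, ← h i.1 i.2, hae_ne k c i.1 i.2]
      · simp only [hS, if_false, if_neg hcc]
        have hne : ae k c ≠ ae k' c' := fun h => hcc ((hae_inj _ _ _ _ h).2.symm)
        rw [if_neg hne]
  -- action of V on each pair
  have hmv : ∀ (ψ : (Fin m → Fin 2) → ℂ) (k : Fin 2) (c : {j : Fin m // j ≠ t} → Fin 2),
      V.mulVec ψ (ae k c) =
        if c ∈ S then Hmat.mulVec (fun k' => ψ (ae k' c)) k else ψ (ae k c) := by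
    intro ψ k c
    have : V.mulVec ψ (ae k c) = ∑ p : Fin 2 × ({j : Fin m // j ≠ t} → Fin 2),
        V (ae k c) (e.symm p) * ψ (e.symm p) := by
      rw [Matrix.mulVec, dotProduct,
        ← Equiv.sum_comp e.symm (fun b => V (ae k c) b * ψ b)]
    rw [this, Fintype.sum_prod_type]
    have hterm : ∀ (k' : Fin 2) (c' : {j : Fin m // j ≠ t} → Fin 2),
        V (ae k c) (ae k' c') * ψ (ae k' c') =
          if c' = c then
            (if c ∈ S then Hmat k k' else if k' = k then 1 else 0) * ψ (ae k' c')
          else 0 := by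
      intro k' c'
      rw [hentry, ite_mul, zero_mul]
    simp only [hae] at hterm ⊢
    calc (∑ k' : Fin 2, ∑ c' : {j : Fin m // j ≠ t} → Fin 2,
            V (e.symm (k, c)) (e.symm (k', c')) * ψ (e.symm (k', c')))
        = ∑ k' : Fin 2,
            (if c ∈ S then Hmat k k' else if k' = k then 1 else 0) * ψ (e.symm (k', c)) := by
          refine Finset.sum_congr rfl fun k' _ => ?_
          rw [Finset.sum_congr rfl fun c' _ => hterm k' c', Finset.sum_ite_eq' Finset.univ c]
          simp
      _ = if c ∈ S then Hmat.mulVec (fun k' => ψ (e.symm (k', c))) k else ψ (e.symm (k, c)) := by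
          by_cases hS : c ∈ S
          · simp only [hS, if_true]
            rfl
          · simp only [hS, if_false]
            simp [ite_mul, Finset.sum_ite_eq']
  constructor
  · intro ψ hψ
    have hsum1 : cohRank ψ = ∑ c, cohRank (fun k : Fin 2 => ψ (e.symm (k, c))) :=
      cohRank_eq_sum e.symm ψ
    have hsum2 : cohRank (V.mulVec ψ) =
        ∑ c, cohRank (fun k : Fin 2 => V.mulVec ψ (e.symm (k, c))) :=
      cohRank_eq_sum e.symm (V.mulVec ψ)
    have hpt : ∀ c : {j : Fin m // j ≠ t} → Fin 2,
        cohRank (fun k : Fin 2 => V.mulVec ψ (e.symm (k, c))) ≤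
          2 * cohRank (fun k : Fin 2 => ψ (e.symm (k, c))) ∧
        cohRank (fun k : Fin 2 => ψ (e.symm (k, c))) ≤
          2 * cohRank (fun k : Fin 2 => V.mulVec ψ (e.symm (k, c))) := by
      intro c
      have hfun : (fun k : Fin 2 => V.mulVec ψ (e.symm (k, c))) =
          if c ∈ S then Hmat.mulVec (fun k' => ψ (e.symm (k', c)))
          else fun k => ψ (e.symm (k, c)) := by
        funext k
        rw [hmv ψ k c]
        by_cases hS : c ∈ S <;> simp [hS, hae]
      rw [hfun]
      by_cases hS : c ∈ S
      · simp only [hS, if_true]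
        exact hadamard_pair_bound _
      · simp only [hS, if_false]
        omega
    have hle1 : cohRank (V.mulVec ψ) ≤ 2 * cohRank ψ := by
      rw [hsum1, hsum2, Finset.mul_sum]
      exact Finset.sum_le_sum fun c _ => (hpt c).1
    have hle2 : cohRank ψ ≤ 2 * cohRank (V.mulVec ψ) := by
      rw [hsum1, hsum2, Finset.mul_sum]
      exact Finset.sum_le_sum fun c _ => (hpt c).2
    constructor
    · rw [div_le_iff₀ (by norm_num : (0:ℝ) < 2)]
      calc (cohRank ψ : ℝ) ≤ (2 * cohRank (V.mulVec ψ) : ℕ) := by exact_mod_cast hle2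
        _ = (cohRank (V.mulVec ψ) : ℝ) * 2 := by push_cast; ring
    · calc (cohRank (V.mulVec ψ) : ℝ) ≤ ((2 * cohRank ψ : ℕ) : ℝ) := by exact_mod_cast hle1
        _ = 2 * (cohRank ψ : ℝ) := by push_cast; ring
  · rintro U ⟨π, θ, hU⟩ ψ hψ
    have hUmv : ∀ i, U.mulVec ψ i = Complex.exp ((θ (π.symm i) : ℂ) * Complex.I) * ψ (π.symm i) := by
      intro i
      rw [hU, Matrix.mulVec, dotProduct]
      have : ∀ j, (Matrix.of fun i j =>
          if i = π j then Complex.exp ((θ j : ℂ) * Complex.I) else 0) i j * ψ j =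
          if j = π.symm i then Complex.exp ((θ j : ℂ) * Complex.I) * ψ j else 0 := by
        intro j
        simp only [Matrix.of_apply, ite_mul, zero_mul]
        congr 1
        simp [eq_comm, Equiv.eq_symm_apply, Equiv.symm_apply_eq]
      rw [Finset.sum_congr rfl fun j _ => this j, Finset.sum_ite_eq' Finset.univ]
      simp
    unfold cohRank
    rw [Finset.card_filter, Finset.card_filter,
      ← Equiv.sum_comp π.symm (fun j => if ψ j ≠ 0 then 1 else 0)]
    refine Finset.sum_congr rfl fun i _ => ?_
    rw [hUmv i]
    simp [Complex.exp_ne_zero]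
end
end
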